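/- Let P₁ ⊆ ℝ^{d₁} and P₂ ⊆ ℝ^{d₂} be polytopes with 0 in their interiors that are self-polar by orthogonal transformations U₁ and U₂ respectively. Fix a ≠ 0 and let Q ⊆ ℝ^{d₁+d₂+1} be the convex hull of the points (√(1+a²) v ; 0 ; a) for vertices v of P₁ and (0 ; √(1+1/a²) w ; −1/a) for vertices w of P₂. Then Q = W Q°, where W is block-diagonal with blocks U₁, U₂, and −1. -/

import Mathlib

open Matrix

noncomputable section

/-- The polar of a set of vectors indexed by a finite type. -/
def polar {ι : Type} [Fintype ι] (A : Set (ι → ℝ)) : Set (ι → ℝ) :=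
  {x | ∀ a ∈ A, x ⬝ᵥ a ≤ 1}

namespace JoinSelfPolarAux

variable {ι : Type} [Fintype ι]

lemma isLinearMap_dot (x : ι → ℝ) : IsLinearMap ℝ (fun v : ι → ℝ => x ⬝ᵥ v) :=
  ⟨fun u v => dotProduct_add x u v, fun c v => by
    simp [dotProduct_smul, smul_eq_mul]⟩

lemma forall_hull {V : Set (ι → ℝ)} {x : ι → ℝ} {c : ℝ}
    (h : ∀ v ∈ V, x ⬝ᵥ v ≤ c) {u : ι → ℝ} (hu : u ∈ convexHull ℝ V) : x ⬝ᵥ u ≤ c :=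
  convexHull_min h (convex_halfSpace_le (isLinearMap_dot x) c) hu

lemma eq_zero_of_dot_nonpos {P : Set (ι → ℝ)} (h0 : (0 : ι → ℝ) ∈ interior P)
    {x : ι → ℝ} (h : ∀ u ∈ P, x ⬝ᵥ u ≤ 0) : x = 0 := by
  have hcont : Filter.Tendsto (fun t : ℝ => t • x) (nhdsWithin 0 (Set.Ioi 0)) (nhds 0) := by
    have h1 : Filter.Tendsto (fun t : ℝ => t • x) (nhds 0) (nhds ((0:ℝ) • x)) :=
      (continuous_id.smul continuous_const).tendsto 0
    rw [zero_smul] at h1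
    exact h1.mono_left nhdsWithin_le_nhds
  have hP : ∀ᶠ y in nhds (0 : ι → ℝ), y ∈ P := by
    have := mem_interior_iff_mem_nhds.mp h0
    exact Filter.eventually_of_mem this (fun y hy => hy)
  have hmem : ∀ᶠ t in nhdsWithin (0:ℝ) (Set.Ioi 0), t • x ∈ P := hcont.eventually hP
  obtain ⟨t, htP, ht⟩ := (hmem.and eventually_mem_nhdsWithin).exists
  have hdot : x ⬝ᵥ (t • x) ≤ 0 := h _ htP
  rw [dotProduct_smul, smul_eq_mul] at hdot
  have htpos : (0:ℝ) < t := ht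
  have hxx : x ⬝ᵥ x ≤ 0 := nonpos_of_mul_nonpos_right hdot htpos
  have hxx' : 0 ≤ x ⬝ᵥ x := Finset.sum_nonneg fun i _ => mul_self_nonneg (x i)
  exact dotProduct_self_eq_zero.mp (le_antisymm hxx hxx')

lemma polar_convexHull (A : Set (ι → ℝ)) : polar (convexHull ℝ A) = polar A := by
  ext x
  constructor
  · intro h v hv; exact h v (subset_convexHull ℝ A hv)
  · intro h u hu; exact forall_hull h hu

lemma key {d : ℕ} (V : Finset (Fin d → ℝ)) (P : Set (Fin d → ℝ))
    (hP : P = convexHull ℝ (V : Set (Fin d → ℝ))) (h0 : (0 : Fin d → ℝ) ∈ interior P)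
    (U : Matrix (Fin d) (Fin d) ℝ) (hself : P = U.mulVec '' polar P)
    (x : Fin d → ℝ) (c : ℝ) (hc : 0 ≤ c) (h : ∀ v ∈ (V : Set (Fin d → ℝ)), x ⬝ᵥ v ≤ c) :
    ∃ u ∈ P, U.mulVec x = c • u := by
  have hPbound : ∀ u ∈ P, x ⬝ᵥ u ≤ c := by
    intro u hu; exact forall_hull h (hP ▸ hu)
  rcases eq_or_lt_of_le hc with hc0 | hcpos
  · -- c = 0
    have hx0 : x = 0 := eq_zero_of_dot_nonpos h0 (fun u hu => (hPbound u hu).trans hc0.ge)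
    refine ⟨0, interior_subset h0, ?_⟩
    rw [hx0, Matrix.mulVec_zero, smul_zero]
  · -- c > 0
    have hx : c⁻¹ • x ∈ polar P := by
      intro u hu
      rw [smul_dotProduct, smul_eq_mul]
      calc c⁻¹ * (x ⬝ᵥ u) ≤ c⁻¹ * c :=
            mul_le_mul_of_nonneg_left (hPbound u hu) (inv_nonneg.mpr hc)
        _ = 1 := inv_mul_cancel₀ hcpos.ne'
    refine ⟨U.mulVec (c⁻¹ • x), hself ▸ Set.mem_image_of_mem _ hx, ?_⟩
    rw [Matrix.mulVec_smul, smul_smul, mul_inv_cancel₀ hcpos.ne', one_smul]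

lemma dot_elim {d₁ d₂ : ℕ} (p : (Fin d₁ ⊕ (Fin d₂ ⊕ Fin 1)) → ℝ) (x : Fin d₁ → ℝ)
    (y : Fin d₂ → ℝ) (z : ℝ) :
    p ⬝ᵥ (Sum.elim x (Sum.elim y fun _ => z)) =
      (fun i => p (Sum.inl i)) ⬝ᵥ x + (fun j => p (Sum.inr (Sum.inl j))) ⬝ᵥ y
        + p (Sum.inr (Sum.inr 0)) * z := by
  simp [dotProduct, Fintype.sum_sum_type, add_assoc]

def embA (d₁ d₂ : ℕ) (s z : ℝ) : (Fin d₁ → ℝ) →ᵃ[ℝ] ((Fin d₁ ⊕ (Fin d₂ ⊕ Fin 1)) → ℝ) where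
  toFun v := Sum.elim (s • v) (Sum.elim 0 fun _ => z)
  linear :=
    { toFun := fun v => Sum.elim (s • v) 0
      map_add' := fun u v => by funext i; cases i <;> simp [smul_add, mul_add]
      map_smul' := fun c v => by
        funext i; cases i <;> simp [smul_eq_mul] <;> ring }
  map_vadd' := fun p v => by
    funext i
    cases i <;> simp [smul_add, mul_add]

def embB (d₁ d₂ : ℕ) (s z : ℝ) : (Fin d₂ → ℝ) →ᵃ[ℝ] ((Fin d₁ ⊕ (Fin d₂ ⊕ Fin 1)) → ℝ) where
  toFun w := Sum.elim 0 (Sum.elim (s • w) fun _ => z)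
  linear :=
    { toFun := fun w => Sum.elim 0 (Sum.elim (s • w) 0)
      map_add' := fun u v => by
        funext i; rcases i with i | j; · simp
        rcases j with j | k <;> simp [smul_add, mul_add]
      map_smul' := fun c v => by
        funext i; rcases i with i | j; · simp
        rcases j with j | k <;> simp [smul_eq_mul] <;> ring }
  map_vadd' := fun p v => by
    funext i
    rcases i with i | j
    · simp
    rcases j with j | k <;> simp [smul_add, mul_add]

end JoinSelfPolarAux

open JoinSelfPolarAux in
theorem join_selfPolar {d₁ d₂ : ℕ}
    (V₁ : Finset (Fin d₁ → ℝ)) (P₁ : Set (Fin d₁ → ℝ))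
    (hP₁ : P₁ = convexHull ℝ (V₁ : Set (Fin d₁ → ℝ))) (h01 : 0 ∈ interior P₁)
    (V₂ : Finset (Fin d₂ → ℝ)) (P₂ : Set (Fin d₂ → ℝ))
    (hP₂ : P₂ = convexHull ℝ (V₂ : Set (Fin d₂ → ℝ))) (h02 : 0 ∈ interior P₂)
    (U₁ : Matrix (Fin d₁) (Fin d₁) ℝ) (hU₁ : U₁ ∈ Matrix.orthogonalGroup (Fin d₁) ℝ)
    (hself₁ : P₁ = U₁.mulVec '' polar P₁)
    (U₂ : Matrix (Fin d₂) (Fin d₂) ℝ) (hU₂ : U₂ ∈ Matrix.orthogonalGroup (Fin d₂) ℝ)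
    (hself₂ : P₂ = U₂.mulVec '' polar P₂)
    (a : ℝ) (ha : a ≠ 0)
    (emb : (Fin d₁ → ℝ) → (Fin d₂ → ℝ) → ℝ → ((Fin d₁ ⊕ (Fin d₂ ⊕ Fin 1)) → ℝ))
    (hemb : ∀ x y z, emb x y z = Sum.elim x (Sum.elim y fun _ => z))
    (Q : Set ((Fin d₁ ⊕ (Fin d₂ ⊕ Fin 1)) → ℝ))
    (hQ : Q = convexHull ℝ
      ((fun v => emb (Real.sqrt (1 + a ^ 2) • v) 0 a) '' (V₁ : Set (Fin d₁ → ℝ)) ∪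
        (fun w => emb 0 (Real.sqrt (1 + 1 / a ^ 2) • w) (-1 / a)) '' (V₂ : Set (Fin d₂ → ℝ))))
    (W : ((Fin d₁ ⊕ (Fin d₂ ⊕ Fin 1)) → ℝ) → ((Fin d₁ ⊕ (Fin d₂ ⊕ Fin 1)) → ℝ))
    (hW : ∀ q, W q = Sum.elim (U₁.mulVec (fun i => q (Sum.inl i)))
      (Sum.elim (U₂.mulVec (fun j => q (Sum.inr (Sum.inl j))))
        (fun i => -(q (Sum.inr (Sum.inr i)))))) :
    Q = W '' polar Q := by
  have ha2 : (0:ℝ) < 1 + a ^ 2 := by positivity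
  have ha2' : (0:ℝ) < 1 + 1 / a ^ 2 := by positivity
  set s₁ := Real.sqrt (1 + a ^ 2) with hs₁def
  set s₂ := Real.sqrt (1 + 1 / a ^ 2) with hs₂def
  have hs₁sq : s₁ ^ 2 = 1 + a ^ 2 := Real.sq_sqrt ha2.le
  have hs₂sq : s₂ ^ 2 = 1 + 1 / a ^ 2 := Real.sq_sqrt ha2'.le
  have hs₁pos : 0 < s₁ := Real.sqrt_pos.mpr ha2
  have hs₂pos : 0 < s₂ := Real.sqrt_pos.mpr ha2'
  have hss₁ : s₁ * s₁ = 1 + a ^ 2 := by rw [← pow_two, hs₁sq]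
  have hss₂ : s₂ * s₂ = 1 + 1 / a ^ 2 := by rw [← pow_two, hs₂sq]
  have h0P₁ : (0 : Fin d₁ → ℝ) ∈ P₁ := interior_subset h01
  have h0P₂ : (0 : Fin d₂ → ℝ) ∈ P₂ := interior_subset h02
  have hV₁ne : (V₁ : Set (Fin d₁ → ℝ)).Nonempty := by
    rcases Set.eq_empty_or_nonempty (V₁ : Set (Fin d₁ → ℝ)) with h | h
    · rw [h, convexHull_empty] at hP₁
      exact absurd (hP₁ ▸ h0P₁) (Set.notMem_empty 0)
    · exact h
  have hV₂ne : (V₂ : Set (Fin d₂ → ℝ)).Nonempty := by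
    rcases Set.eq_empty_or_nonempty (V₂ : Set (Fin d₂ → ℝ)) with h | h
    · rw [h, convexHull_empty] at hP₂
      exact absurd (hP₂ ▸ h0P₂) (Set.notMem_empty 0)
    · exact h
  set S₁ := (fun v => emb (s₁ • v) 0 a) '' (V₁ : Set (Fin d₁ → ℝ)) with hS₁def
  set S₂ := (fun w => emb 0 (s₂ • w) (-1 / a)) '' (V₂ : Set (Fin d₂ → ℝ)) with hS₂def
  have hfA : (fun v => emb (s₁ • v) 0 a) = ⇑(embA d₁ d₂ s₁ a) := by
    funext v; rw [hemb]; rfl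
  have hfB : (fun w => emb 0 (s₂ • w) (-1 / a)) = ⇑(embB d₁ d₂ s₂ (-1 / a)) := by
    funext w; rw [hemb]; rfl
  have hhullA : convexHull ℝ S₁ = ⇑(embA d₁ d₂ s₁ a) '' P₁ := by
    rw [hS₁def, hfA, ← AffineMap.image_convexHull, ← hP₁]
  have hhullB : convexHull ℝ S₂ = ⇑(embB d₁ d₂ s₂ (-1 / a)) '' P₂ := by
    rw [hS₂def, hfB, ← AffineMap.image_convexHull, ← hP₂]
  have hQpolar : polar Q = polar (S₁ ∪ S₂) := by rw [hQ, polar_convexHull]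
  have hU₁' : U₁ * star U₁ = 1 := hU₁.2
  have hU₁'' : star U₁ * U₁ = 1 := hU₁.1
  have hU₂' : U₂ * star U₂ = 1 := hU₂.2
  have hU₂'' : star U₂ * U₂ = 1 := hU₂.1
  have hpol₁ : ∀ u ∈ P₁, (star U₁).mulVec u ∈ polar P₁ := by
    intro u hu
    rw [hself₁] at hu
    obtain ⟨r, hr, rfl⟩ := hu
    rw [Matrix.mulVec_mulVec, hU₁'', Matrix.one_mulVec]
    exact hr
  have hpol₂ : ∀ w ∈ P₂, (star U₂).mulVec w ∈ polar P₂ := by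
    intro w hw
    rw [hself₂] at hw
    obtain ⟨r, hr, rfl⟩ := hw
    rw [Matrix.mulVec_mulVec, hU₂'', Matrix.one_mulVec]
    exact hr
  ext q
  constructor
  · -- forward: q ∈ Q → q ∈ W '' polar Q
    intro hq
    rw [hQ, convexHull_union (hV₁ne.image _) (hV₂ne.image _), mem_convexJoin] at hq
    obtain ⟨p₁, hp₁, p₂, hp₂, hseg⟩ := hq
    rw [hhullA] at hp₁
    rw [hhullB] at hp₂
    obtain ⟨u, huP, rfl⟩ := hp₁
    obtain ⟨w, hwP, rfl⟩ := hp₂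
    obtain ⟨b₁, b₂, hb₁, hb₂, hb, hq⟩ := hseg
    refine ⟨Sum.elim ((b₁ * s₁) • ((star U₁).mulVec u))
        (Sum.elim ((b₂ * s₂) • ((star U₂).mulVec w)) (fun _ => -(b₁ * a + b₂ * (-1 / a)))),
        ?_, ?_⟩
    · -- membership in polar Q
      rw [hQpolar]
      rintro t (⟨v, hv, rfl⟩ | ⟨v, hv, rfl⟩)
      · simp only [hemb]
        rw [dot_elim]
        simp only [Sum.elim_inl, Sum.elim_inr, dotProduct_zero,
          dotProduct_smul, smul_dotProduct, smul_eq_mul, add_zero]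
        have ht : ((star U₁).mulVec u) ⬝ᵥ v ≤ 1 :=
          hpol₁ u huP v (hP₁ ▸ subset_convexHull ℝ _ hv)
        have hbd : (b₁ * s₁) * (s₁ * (((star U₁).mulVec u) ⬝ᵥ v)) ≤ b₁ * (1 + a ^ 2) := by
          have h4 : (b₁ * s₁) * (s₁ * (((star U₁).mulVec u) ⬝ᵥ v)) =
              (b₁ * s₁ * s₁) * (((star U₁).mulVec u) ⬝ᵥ v) := by ring
          rw [h4]
          calc (b₁ * s₁ * s₁) * (((star U₁).mulVec u) ⬝ᵥ v)
              ≤ (b₁ * s₁ * s₁) * 1 := by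
                apply mul_le_mul_of_nonneg_left ht
                positivity
            _ = b₁ * (1 + a ^ 2) := by rw [mul_one, mul_assoc, hss₁]
        have ez : (-(b₁ * a + b₂ * (-1 / a))) * a = b₂ - b₁ * a ^ 2 := by
          field_simp; ring
        linarith [hbd, ez]
      · simp only [hemb]
        rw [dot_elim]
        simp only [Sum.elim_inl, Sum.elim_inr, dotProduct_zero,
          dotProduct_smul, smul_dotProduct, smul_eq_mul, zero_add]
        have ht : ((star U₂).mulVec w) ⬝ᵥ v ≤ 1 :=
          hpol₂ w hwP v (hP₂ ▸ subset_convexHull ℝ _ hv)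
        have hbd : (b₂ * s₂) * (s₂ * (((star U₂).mulVec w) ⬝ᵥ v)) ≤ b₂ * (1 + 1 / a ^ 2) := by
          have h4 : (b₂ * s₂) * (s₂ * (((star U₂).mulVec w) ⬝ᵥ v)) =
              (b₂ * s₂ * s₂) * (((star U₂).mulVec w) ⬝ᵥ v) := by ring
          rw [h4]
          calc (b₂ * s₂ * s₂) * (((star U₂).mulVec w) ⬝ᵥ v)
              ≤ (b₂ * s₂ * s₂) * 1 := by
                apply mul_le_mul_of_nonneg_left ht
                positivity
            _ = b₂ * (1 + 1 / a ^ 2) := by rw [mul_one, mul_assoc, hss₂]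
        have ez : (-(b₁ * a + b₂ * (-1 / a))) * (-1 / a) = b₁ - b₂ * (1 / a ^ 2) := by
          field_simp; ring
        have ezz : b₂ * (1 + 1 / a ^ 2) = b₂ + b₂ * (1 / a ^ 2) := by ring
        linarith [hbd, ez, ezz]
    · -- W of it equals q
      rw [← hq, hW]
      funext i
      rcases i with i | j
      · simp only [Sum.elim_inl, Sum.elim_inr, Matrix.mulVec_smul, Matrix.mulVec_mulVec,
          hU₁', Matrix.one_mulVec]
        simp [embA, embB, smul_eq_mul]
        try ring
      · rcases j with j | k
        · simp only [Sum.elim_inl, Sum.elim_inr, Matrix.mulVec_smul, Matrix.mulVec_mulVec,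
            hU₂', Matrix.one_mulVec]
          simp [embA, embB, smul_eq_mul]
          try ring
        · simp [embA, embB, smul_eq_mul]
          try ring
  · -- backward: q ∈ W '' polar Q → q ∈ Q
    rintro ⟨p, hp, rfl⟩
    rw [hQpolar] at hp
    have hc₁ : ∀ v ∈ (V₁ : Set (Fin d₁ → ℝ)),
        (fun i => p (Sum.inl i)) ⬝ᵥ v ≤ (1 - p (Sum.inr (Sum.inr 0)) * a) / s₁ := by
      intro v hv
      have h := hp _ (Set.mem_union_left _ (Set.mem_image_of_mem _ hv))
      simp only [hemb] at h
      rw [dot_elim, dotProduct_zero, dotProduct_smul, smul_eq_mul] at h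
      rw [le_div_iff₀ hs₁pos]
      linarith [h]
    have hc₂ : ∀ w ∈ (V₂ : Set (Fin d₂ → ℝ)),
        (fun j => p (Sum.inr (Sum.inl j))) ⬝ᵥ w ≤ (1 + p (Sum.inr (Sum.inr 0)) / a) / s₂ := by
      intro w hw
      have h := hp _ (Set.mem_union_right _ (Set.mem_image_of_mem _ hw))
      simp only [hemb] at h
      rw [dot_elim, dotProduct_zero, dotProduct_smul, smul_eq_mul] at h
      rw [le_div_iff₀ hs₂pos]
      have e : p (Sum.inr (Sum.inr 0)) * (-1 / a) = -(p (Sum.inr (Sum.inr 0)) / a) := by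
        ring
      rw [e] at h
      linarith [h]
    set z := p (Sum.inr (Sum.inr 0)) with hzdef
    have h0c₁ : 0 ≤ (1 - z * a) / s₁ := by
      have h00 := forall_hull hc₁ (hP₁ ▸ h0P₁)
      rwa [dotProduct_zero] at h00
    have h0c₂ : 0 ≤ (1 + z / a) / s₂ := by
      have h00 := forall_hull hc₂ (hP₂ ▸ h0P₂)
      rwa [dotProduct_zero] at h00
    obtain ⟨u, huP, hu⟩ := key V₁ P₁ hP₁ h01 U₁ hself₁ _ _ h0c₁ hc₁
    obtain ⟨w, hwP, hw⟩ := key V₂ P₂ hP₂ h02 U₂ hself₂ _ _ h0c₂ hc₂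
    set lam := (1 - z * a) / (1 + a ^ 2) with hlamdef
    set mu := (1 + z / a) / (1 + 1 / a ^ 2) with hmudef
    have hc₁eq : (1 - z * a) / s₁ = lam * s₁ := by
      rw [hlamdef, ← hss₁]
      field_simp
    have hc₂eq : (1 + z / a) / s₂ = mu * s₂ := by
      rw [hmudef, ← hss₂]
      field_simp
    have hlam0 : 0 ≤ lam := by
      rw [hc₁eq] at h0c₁
      nlinarith [h0c₁, hs₁pos]
    have hmu0 : 0 ≤ mu := by
      rw [hc₂eq] at h0c₂
      nlinarith [h0c₂, hs₂pos]
    have hlammu : lam + mu = 1 := by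
      rw [hlamdef, hmudef]
      field_simp
      ring
    have hwp : W p = lam • (emb (s₁ • u) 0 a) + mu • (emb 0 (s₂ • w) (-1 / a)) := by
      rw [hW, hemb, hemb]
      funext i
      rcases i with i | j
      · simp only [Sum.elim_inl, Pi.add_apply, Pi.smul_apply, Sum.elim_inr,
          Pi.zero_apply, smul_eq_mul, mul_zero, add_zero]
        rw [congrFun hu i]
        rw [Pi.smul_apply, smul_eq_mul, hc₁eq]
        ring
      · rcases j with j | k
        · simp only [Sum.elim_inl, Pi.add_apply, Pi.smul_apply, Sum.elim_inr,
            Pi.zero_apply, smul_eq_mul, mul_zero, zero_add]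
          rw [congrFun hw j]
          rw [Pi.smul_apply, smul_eq_mul, hc₂eq]
          ring
        · have hk : k = 0 := Subsingleton.elim k 0
          subst hk
          simp only [Sum.elim_inl, Pi.add_apply, Pi.smul_apply, Sum.elim_inr, smul_eq_mul]
          rw [← hzdef, hlamdef, hmudef]
          field_simp
          ring
    rw [hwp, hQ]
    have hA : emb (s₁ • u) 0 a ∈ convexHull ℝ (S₁ ∪ S₂) := by
      apply convexHull_mono Set.subset_union_left
      rw [hhullA]
      exact ⟨u, huP, (congrFun hfA u).symm⟩
    have hB : emb 0 (s₂ • w) (-1 / a) ∈ convexHull ℝ (S₁ ∪ S₂) := by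
      apply convexHull_mono Set.subset_union_right
      rw [hhullB]
      exact ⟨w, hwP, (congrFun hfB w).symm⟩
    exact (convex_convexHull ℝ _) hA hB hlam0 hmu0 hlammu
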